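/- Let A = (A_ij)_{1≤i,j≤3} be a positive semi-definite matrix with diagonal blocks A_11, A_22, A_33 square. Then there exist unitary matrices U, V of appropriate sizes such that conjugating A by the block diagonal unitary I ⊕ U ⊕ V yields a positive semi-definite matrix whose blocks in positions (1,2), (2,1), (2,3), (3,2) are all positive semi-definite, with the same trace norms blockwise as A. -/

import Mathlib

open Matrix ComplexOrder

/-- The trace norm of a rectangular complex matrix: `tr ((Xᴴ X)^{1/2})`,
which equals the sum of the singular values of `X`. -/
noncomputable def traceNorm {m n : ℕ} (X : Matrix (Fin m) (Fin n) ℂ) : ℝ :=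
  (((Matrix.posSemidef_conjTranspose_mul_self X).1.eigenvectorUnitary.1 *
    diagonal (((↑) : ℝ → ℂ) ∘ Real.sqrt ∘ (Matrix.posSemidef_conjTranspose_mul_self X).1.eigenvalues) *
    (star (Matrix.posSemidef_conjTranspose_mul_self X).1.eigenvectorUnitary : Matrix (Fin n) (Fin n) ℂ)).trace).re

/-- The `(i,j)` block of a `3 × 3` partitioned matrix with `n × n` blocks
(indexed as `Fin n × Fin 3`). -/
def blk {n : ℕ} (A : Matrix (Fin n × Fin 3) (Fin n × Fin 3) ℂ) (i j : Fin 3) :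
    Matrix (Fin n) (Fin n) ℂ :=
  Matrix.of fun r s => A (r, i) (s, j)

/-!
Polar decomposition: every square matrix `X` has a unitary `U` with `X Uᴴ ≥ 0`. For invertible `X`
take `U = |Xᴴ|⁻¹ X`, where `|Xᴴ| = √(X Xᴴ)`; in general `X` is a limit of the invertible `X - t`, and
the property survives the limit because the unitary group is compact and the positive cone closed.
Taking `U` from the polar decomposition of `A₁₂` and `V` from that of `U A₂₃`, the conjugated
off-diagonal blocks are `A₁₂ Uᴴ`, `U A₂₃ Vᴴ` and their adjoints. Trace norms do not change because
`√((P X Q)ᴴ (P X Q)) = Qᴴ √(Xᴴ X) Q` for unitary `P`, `Q`.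
-/

open Filter Topology

lemma mem_closure_setOf_isUnit_of_finite_spectrum {𝕜 A : Type*} [NontriviallyNormedField 𝕜]
    [Ring A] [Algebra 𝕜 A] [TopologicalSpace A] [IsTopologicalRing A] [ContinuousSMul 𝕜 A]
    {a : A} (ha : (spectrum 𝕜 a).Finite) : a ∈ closure {x : A | IsUnit x} := by
  have hlim : Tendsto (fun t : 𝕜 => a - algebraMap 𝕜 A t) (𝓝[≠] 0) (𝓝 a) := by
    have : Continuous fun t : 𝕜 => a - algebraMap 𝕜 A t := by fun_prop
    simpa using (this.tendsto 0).mono_left nhdsWithin_le_nhds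
  have hresolvent : ∀ᶠ t in 𝓝[≠] (0 : 𝕜), t ∉ spectrum 𝕜 a := by
    filter_upwards [sdiff_mem_nhdsWithin_compl
      ((ha.sdiff (t := {0})).isClosed.compl_mem_nhds (by simp)) {0}] with t ⟨ht, ht0⟩ hσ
    exact ht ⟨hσ, ht0⟩
  refine mem_closure_of_tendsto hlim (hresolvent.mono fun t ht => ?_)
  rw [spectrum.mem_iff, not_not, ← IsUnit.neg_iff, neg_sub] at ht
  exact ht

lemma isCompact_unitary {A : Type*} [NormedRing A] [StarRing A] [CStarRing A] [ProperSpace A] :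
    IsCompact (unitary A : Set A) := by
  refine Metric.isCompact_of_isClosed_isBounded isClosed_unitary ?_
  refine (Metric.isBounded_closedBall (x := 0) (r := ‖(1 : A)‖)).subset fun u hu => ?_
  simpa using (CStarRing.norm_coe_unitary_mul ⟨u, hu⟩ 1).le

lemma CFC.sqrt_star_mul_mul_of_mem_unitary {A : Type*} [PartialOrder A] [Ring A] [StarRing A]
    [TopologicalSpace A] [Algebra ℝ A] [StarOrderedRing A]
    [NonUnitalContinuousFunctionalCalculus ℝ A IsSelfAdjoint] [NonnegSpectrumClass ℝ A]
    [IsSemitopologicalRing A] [T2Space A] {u a : A} (hu : u ∈ unitary A) (ha : 0 ≤ a) :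
    CFC.sqrt (star u * a * u) = star u * CFC.sqrt a * u := by
  refine CFC.sqrt_unique ?_ (star_left_conjugate_nonneg (CFC.sqrt_nonneg a) u)
  calc star u * CFC.sqrt a * u * (star u * CFC.sqrt a * u)
      = star u * CFC.sqrt a * (u * star u) * CFC.sqrt a * u := by simp only [mul_assoc]
    _ = star u * a * u := by
      rw [Unitary.mul_star_self_of_mem hu, mul_one, mul_assoc (star u),
        CFC.sqrt_mul_sqrt_self a]

section Polar

variable {A : Type*} [CStarAlgebra A] [PartialOrder A] [StarOrderedRing A]

lemma exists_mem_unitary_mul_star_nonneg_of_isUnit {x : A} (hx : IsUnit x) :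
    ∃ u ∈ unitary A, 0 ≤ x * star u := by
  have hxx : 0 ≤ x * star x := mul_star_self_nonneg x
  obtain ⟨p, hp⟩ : IsUnit (CFC.sqrt (x * star x)) :=
    (CFC.isUnit_sqrt_iff _ hxx).2 (hx.mul hx.star)
  have hpp : (p : A) * p = x * star x := hp ▸ CFC.sqrt_mul_sqrt_self _ hxx
  have hps : star p = p := Units.ext <| by
    rw [Units.coe_star, hp]
    exact (CFC.sqrt_nonneg _).isSelfAdjoint.star_eq
  have hstar_inv : star (↑p⁻¹ : A) = ↑p⁻¹ := by rw [← Units.coe_star_inv, hps]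
  refine ⟨↑p⁻¹ * x, ?_, ?_⟩
  · rw [(p⁻¹.isUnit.mul hx).mem_unitary_iff_mul_star_self, star_mul, hstar_inv, mul_assoc,
      ← mul_assoc x, ← hpp]
    simp [mul_assoc]
  · rw [star_mul, hstar_inv, ← mul_assoc, ← hpp, mul_assoc, Units.mul_inv, mul_one, hp]
    exact CFC.sqrt_nonneg _

lemma isClosed_setOf_exists_mem_unitary_mul_star_nonneg [ProperSpace A] :
    IsClosed {x : A | ∃ u ∈ unitary A, 0 ≤ x * star u} := by
  have : CompactSpace (unitary A) := isCompact_iff_compactSpace.1 isCompact_unitary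
  convert isClosedMap_fst_of_compactSpace _ (isClosed_le (continuous_const (y := (0 : A)))
    (by fun_prop : Continuous fun p : A × unitary A => p.1 * star (p.2 : A)))
  ext x
  simp

lemma exists_mem_unitary_mul_star_nonneg_of_finite_spectrum [ProperSpace A] {x : A}
    (hx : (spectrum ℂ x).Finite) : ∃ u ∈ unitary A, 0 ≤ x * star u :=
  isClosed_setOf_exists_mem_unitary_mul_star_nonneg.closure_subset_iff.2
    (fun _ hy => exists_mem_unitary_mul_star_nonneg_of_isUnit hy)
    (mem_closure_setOf_isUnit_of_finite_spectrum hx)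

end Polar

open scoped Matrix.Norms.L2Operator MatrixOrder in
lemma Matrix.exists_mem_unitaryGroup_posSemidef_mul_conjTranspose {n : Type*} [Fintype n]
    [DecidableEq n] (X : Matrix n n ℂ) : ∃ U ∈ unitaryGroup n ℂ, (X * Uᴴ).PosSemidef := by
  obtain ⟨U, hU, hXU⟩ := exists_mem_unitary_mul_star_nonneg_of_finite_spectrum X.finite_spectrum
  exact ⟨U, hU, hXU.posSemidef⟩

open scoped MatrixOrder in
lemma traceNorm_eq_re_trace_sqrt {m n : ℕ} (X : Matrix (Fin m) (Fin n) ℂ) :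
    traceNorm X = (CFC.sqrt (Xᴴ * X)).trace.re := by
  have h := posSemidef_conjTranspose_mul_self X
  rw [CFC.sqrt_eq_cfc, cfc_nnreal_eq_real _ _ h.nonneg, h.1.cfc_eq]
  simp only [IsHermitian.cfc, traceNorm, Real.coe_sqrt, Real.coe_toNNReal',
    Unitary.conjStarAlgAut_apply]
  congr 5
  funext i
  simp [h.eigenvalues_nonneg i]

open scoped MatrixOrder in
lemma traceNorm_mul_mul_of_mem_unitaryGroup {m n : ℕ} {U : Matrix (Fin m) (Fin m) ℂ}
    {V : Matrix (Fin n) (Fin n) ℂ} (hU : U ∈ unitaryGroup (Fin m) ℂ)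
    (hV : V ∈ unitaryGroup (Fin n) ℂ) (X : Matrix (Fin m) (Fin n) ℂ) :
    traceNorm (U * X * V) = traceNorm X := by
  have hgram : (U * X * V)ᴴ * (U * X * V) = star V * (Xᴴ * X) * V := by
    calc (U * X * V)ᴴ * (U * X * V) = star V * Xᴴ * (star U * U) * X * V := by
          simp only [conjTranspose_mul, star_eq_conjTranspose, Matrix.mul_assoc]
      _ = star V * (Xᴴ * X) * V := by
          rw [Unitary.star_mul_self_of_mem hU, Matrix.mul_one, Matrix.mul_assoc (star V)]
  rw [traceNorm_eq_re_trace_sqrt, traceNorm_eq_re_trace_sqrt, hgram,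
    CFC.sqrt_star_mul_mul_of_mem_unitary hV (posSemidef_conjTranspose_mul_self X).nonneg,
    trace_mul_cycle, Unitary.mul_star_self_of_mem hV, one_mul]

lemma conjTranspose_blk {n : ℕ} (A : Matrix (Fin n × Fin 3) (Fin n × Fin 3) ℂ) (i j : Fin 3) :
    (blk A i j)ᴴ = blk Aᴴ j i := by
  ext
  simp [blk]

lemma blk_blockDiagonal_mul_mul_conjTranspose {n : ℕ} (M : Fin 3 → Matrix (Fin n) (Fin n) ℂ)
    (A : Matrix (Fin n × Fin 3) (Fin n × Fin 3) ℂ) (i j : Fin 3) :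
    blk (blockDiagonal M * A * (blockDiagonal M)ᴴ) i j = M i * blk A i j * (M j)ᴴ := by
  ext r s
  simp [blk, blockDiagonal_conjTranspose, mul_apply, Fintype.sum_prod_type, blockDiagonal_apply]

/-- The reduction step in the proof of Theorem 1: conjugating a partitioned positive
semi-definite matrix by a block-diagonal unitary `I ⊕ U ⊕ V` so that the resulting
matrix is positive semi-definite, its `(1,2), (2,1), (2,3), (3,2)` blocks are
positive semi-definite, and all blocks have the same trace norms as those of `A`. -/
theorem exists_blockDiagonal_unitary_conj {n : ℕ}
    (A : Matrix (Fin n × Fin 3) (Fin n × Fin 3) ℂ) (hA : A.PosSemidef) :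
    ∃ U V : Matrix (Fin n) (Fin n) ℂ,
      U ∈ Matrix.unitaryGroup (Fin n) ℂ ∧ V ∈ Matrix.unitaryGroup (Fin n) ℂ ∧
      ∀ W : Matrix (Fin n × Fin 3) (Fin n × Fin 3) ℂ,
        W = Matrix.blockDiagonal ![(1 : Matrix (Fin n) (Fin n) ℂ), U, V] →
        (W * A * Wᴴ).PosSemidef ∧
        (blk (W * A * Wᴴ) 0 1).PosSemidef ∧ (blk (W * A * Wᴴ) 1 0).PosSemidef ∧
        (blk (W * A * Wᴴ) 1 2).PosSemidef ∧ (blk (W * A * Wᴴ) 2 1).PosSemidef ∧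
        ∀ i j : Fin 3, traceNorm (blk (W * A * Wᴴ) i j) = traceNorm (blk A i j) := by
  obtain ⟨U, hU, hU01⟩ := (blk A 0 1).exists_mem_unitaryGroup_posSemidef_mul_conjTranspose
  obtain ⟨V, hV, hV12⟩ := (U * blk A 1 2).exists_mem_unitaryGroup_posSemidef_mul_conjTranspose
  refine ⟨U, V, hU, hV, fun W hW => ?_⟩
  set M : Fin 3 → Matrix (Fin n) (Fin n) ℂ := ![1, U, V]
  have hM : ∀ k, M k ∈ unitaryGroup (Fin n) ℂ := by
    intro k
    fin_cases k
    exacts [one_mem _, hU, hV]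
  have hblk (i j : Fin 3) : blk (W * A * Wᴴ) i j = M i * blk A i j * (M j)ᴴ :=
    hW ▸ blk_blockDiagonal_mul_mul_conjTranspose M A i j
  have hswap (i j : Fin 3) : blk A j i = (blk A i j)ᴴ := by rw [conjTranspose_blk, hA.1]
  refine ⟨hW ▸ hA.mul_mul_conjTranspose_same W, ?_, ?_, ?_, ?_, fun i j => ?_⟩
  · rw [hblk]
    simpa [M] using hU01
  · rw [hblk, hswap 0 1]
    simpa [M] using hU01.conjTranspose
  · rw [hblk]
    exact hV12
  · rw [hblk, hswap 1 2]
    simpa [M, Matrix.mul_assoc] using hV12.conjTranspose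
  · rw [hblk]
    exact traceNorm_mul_mul_of_mem_unitaryGroup (hM i) (Unitary.star_mem (hM j)) _
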